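/- Definition of the Cramér series: with h = h(z) solving m̄(h) = σz for small z, the function λ(z) defined by m̄²/(2σ²) − h·m̄ + log R = z³·λ(z) is analytic at z = 0, with λ(z) = c₀ + c₁z + c₂z² + ⋯ where c₀ = γ₃/(6σ³) and c₁ = (σ²γ₄ − 3γ₃²)/(24σ⁶). -/

import Mathlib

open MeasureTheory Real

open Filter FormalMultilinearSeries Nat
open scoped Topology ENNReal NNReal

lemma AnalyticAt.deriv' {f : ℝ → ℝ} {x : ℝ} (h : AnalyticAt ℝ f x) : AnalyticAt ℝ (deriv f) x := by
  have h1 : AnalyticAt ℝ (fun y => fderiv ℝ f y 1) x :=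
    ((ContinuousLinearMap.apply ℝ ℝ (1:ℝ)).analyticAt _).comp h.fderiv
  exact h1.congr (Filter.Eventually.of_forall fun y => fderiv_apply_one_eq_deriv)

lemma analyticAt_rlog_one : AnalyticAt ℝ Real.log 1 := by
  set c : ℕ → ℝ := fun n => -(-1:ℝ)^n / n with hc
  have hcb : ∀ n, ‖c n‖ ≤ 1 := by
    intro n
    rcases n with _ | m
    · simp [hc]
    · simp only [hc, norm_div, norm_neg, norm_pow, norm_neg, norm_one, one_pow]
      rw [div_le_one (by exact_mod_cast Nat.succ_pos m)]
      simp only [Real.norm_natCast]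
      exact_mod_cast Nat.one_le_iff_ne_zero.mpr (Nat.succ_ne_zero m)
  have hball : HasFPowerSeriesOnBall Real.log (ofScalars ℝ c) 1 (((1/2 : ℝ≥0)) : ℝ≥0∞) := by
    refine ⟨?_, by norm_num, ?_⟩
    · refine le_radius_of_bound _ 1 fun n => ?_
      rw [ofScalars_norm]
      calc ‖c n‖ * ((1/2 : ℝ≥0) : ℝ) ^ n ≤ 1 * 1 ^ n := by
            apply mul_le_mul (hcb n) (by norm_num [pow_le_one₀]) (by positivity) (by norm_num)
        _ = 1 := by norm_num
    · intro y hy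
      have hy' : |y| < 1 := by
        rw [EMetric.mem_ball, edist_zero_right] at hy
        have h2 : ‖y‖₊ < (1/2 : ℝ≥0) := by exact_mod_cast hy
        have h3 : ‖y‖ < ((1/2:ℝ≥0) : ℝ) := h2
        rw [Real.norm_eq_abs] at h3
        calc |y| < ((1/2:ℝ≥0) : ℝ) := h3
          _ < 1 := by norm_num
      have h0 : HasSum (fun n : ℕ => (-y) ^ (n+1) / (n+1)) (-Real.log (1 - -y)) :=
        Real.hasSum_pow_div_log_of_abs_lt_one (by simpa using hy')
      have h1 : HasSum (fun n : ℕ => c (n+1) * y ^ (n+1)) (Real.log (1 + y)) := by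
        have := h0.neg
        simp only [sub_neg_eq_add, neg_neg] at this
        convert this using 2 with n
        · rfl
        simp only [hc, neg_pow (-1:ℝ), neg_pow (y)]
        push_cast
        ring
      have h2 : HasSum (fun n : ℕ => c n * y ^ n) (Real.log (1 + y)) := by
        have := (hasSum_nat_add_iff (f := fun n : ℕ => c n * y ^ n) 1).mp h1
        simpa [hc] using this
      have : (fun n => (ofScalars ℝ c n) fun _ => y) = fun n => c n * y ^ n := by
        funext n; rw [ofScalars_apply_eq]; simp
      rw [this]
      simpa using h2
  exact hball.hasFPowerSeriesAt.analyticAt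

section MGF
variable (μ : Measure ℝ) [IsProbabilityMeasure μ] (A : ℝ)

-- basic bound : |x|^n/n! ≤ exp |x|
lemma pow_div_fact_le_exp (x : ℝ) (hx : 0 ≤ x) (n : ℕ) : x ^ n / (n)! ≤ Real.exp x := by
  have h := NormedSpace.expSeries_div_hasSum_exp x
  rw [← Real.exp_eq_exp_ℝ] at h
  exact le_hasSum h n (fun j _ => by positivity)

lemma exp_abs_le_D (B x : ℝ) (hB : 0 ≤ B) :
    Real.exp (B * |x|) ≤ Real.exp (B * x) + Real.exp (-B * x) := by
  rcases abs_cases x with ⟨h1, _⟩ | ⟨h1, _⟩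
  · rw [h1]; nlinarith [Real.exp_pos (-B * x)]
  · rw [h1]; have : B * -x = -B * x := by ring
    rw [this]; nlinarith [Real.exp_pos (B * x)]

theorem mgf_hasFPowerSeriesOnBall (hA : 0 < A)
    (hfin : ∀ t : ℝ, |t| < A → Integrable (fun y => Real.exp (t * y)) μ) :
    HasFPowerSeriesOnBall (fun t => ∫ y, Real.exp (t * y) ∂μ)
      (ofScalars ℝ (fun n => (∫ y, y ^ n ∂μ) / (n)!)) 0 ((A/2).toNNReal : ℝ≥0∞) := by
  set B := A / 2 with hBdef
  have hB0 : 0 < B := by positivity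
  have hBA : B < A := by simp [hBdef]; linarith
  set D : ℝ → ℝ := fun y => Real.exp (B * y) + Real.exp (-B * y) with hD
  have hDint : Integrable D μ := by
    refine (hfin B (by rwa [abs_of_pos hB0])).add ?_
    have := hfin (-B) (by rwa [abs_neg, abs_of_pos hB0])
    simpa using this
  have hDnonneg : ∀ y, 0 ≤ D y := fun y => by positivity
  -- pointwise domination
  have hdom : ∀ t : ℝ, |t| ≤ B → ∀ (n : ℕ) (y : ℝ), |t * y| ^ n / (n)! ≤ D y := by
    intro t ht n y
    calc |t * y| ^ n / (n)! ≤ Real.exp |t * y| :=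
          pow_div_fact_le_exp _ (abs_nonneg _) n
      _ ≤ Real.exp (B * |y|) := by
          apply Real.exp_le_exp.mpr
          rw [abs_mul]
          exact mul_le_mul_of_nonneg_right ht (abs_nonneg _)
      _ ≤ D y := exp_abs_le_D B y hB0.le
  -- integrability of monomials
  have hmono : ∀ (t : ℝ), |t| ≤ B → ∀ (n : ℕ),
      Integrable (fun y => t ^ n / (n)! * y ^ n) μ := by
    intro t ht n
    refine hDint.mono ((continuous_const.mul (continuous_pow n)).aestronglyMeasurable) ?_
    refine Eventually.of_forall fun y => ?_
    rw [Real.norm_eq_abs, Real.norm_eq_abs, abs_of_nonneg (hDnonneg y)]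
    calc |t ^ n / (n)! * y ^ n| = |t * y| ^ n / (n)! := by
          rw [abs_mul, abs_div, abs_pow, abs_pow, abs_mul, mul_pow, Nat.abs_cast]
          ring
      _ ≤ D y := hdom t ht n y
  -- summability of integrals of norms
  have hsumnorm : ∀ (t : ℝ), |t| ≤ B →
      Summable (fun n => ∫ y, ‖t ^ n / (n)! * y ^ n‖ ∂μ) := by
    intro t ht
    apply summable_of_sum_range_le (c := ∫ y, D y ∂μ)
      (fun n => integral_nonneg fun y => norm_nonneg _)
    intro N
    rw [← integral_finset_sum _ (fun n _ => (hmono t ht n).norm)]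
    apply integral_mono (integrable_finset_sum _ (fun n _ => (hmono t ht n).norm)) hDint
    intro y
    calc ∑ n ∈ Finset.range N, ‖t ^ n / (n)! * y ^ n‖
        = ∑ n ∈ Finset.range N, |t * y| ^ n / (n)! := by
          apply Finset.sum_congr rfl
          intro n _
          rw [Real.norm_eq_abs, abs_mul, abs_div, abs_pow, abs_pow, abs_mul, mul_pow,
            Nat.abs_cast]
          ring
      _ ≤ Real.exp |t * y| := by
          have h := NormedSpace.expSeries_div_hasSum_exp |t * y|
          rw [← Real.exp_eq_exp_ℝ] at h
          exact sum_le_hasSum _ (fun j _ => by positivity) h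
      _ ≤ D y := by
          calc Real.exp |t * y| ≤ Real.exp (B * |y|) := by
                apply Real.exp_le_exp.mpr
                rw [abs_mul]
                exact mul_le_mul_of_nonneg_right ht (abs_nonneg _)
            _ ≤ D y := exp_abs_le_D B y hB0.le
  -- the HasSum statement
  have hhassum : ∀ (t : ℝ), |t| ≤ B →
      HasSum (fun n => (∫ y, y ^ n ∂μ) / (n)! * t ^ n) (∫ y, Real.exp (t * y) ∂μ) := by
    intro t ht
    have key : HasSum (fun n => ∫ y, t ^ n / (n)! * y ^ n ∂μ)
        (∫ y, (∑' n : ℕ, t ^ n / (n)! * y ^ n) ∂μ) :=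
      hasSum_integral_of_summable_integral_norm (fun n => hmono t ht n) (hsumnorm t ht)
    have hpt : ∀ y : ℝ, (∑' n : ℕ, t ^ n / (n)! * y ^ n) = Real.exp (t * y) := by
      intro y
      have h := NormedSpace.expSeries_div_hasSum_exp (t * y)
      rw [← Real.exp_eq_exp_ℝ] at h
      rw [← h.tsum_eq]
      apply tsum_congr
      intro n
      rw [mul_pow]
      ring
    have key2 : HasSum (fun n => ∫ y, t ^ n / (n)! * y ^ n ∂μ)
        (∫ y, Real.exp (t * y) ∂μ) := by
      convert key using 2
      funext y
      exact (hpt y).symm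
    convert key2 using 2 with n
    rw [integral_const_mul]
    ring
  constructor
  · -- radius bound
    refine le_trans (le_of_eq ?_) (le_radius_of_bound _ (∫ y, D y ∂μ) (r := (A/2).toNNReal)
      fun n => ?_)
    · rfl
    · rw [ofScalars_norm]
      have hco : ((A/2).toNNReal : ℝ) = B := Real.coe_toNNReal _ hB0.le
      rw [hco]
      have h1 : ‖(∫ y, y ^ n ∂μ) / (n)!‖ * B ^ n ≤ ∫ y, ‖B ^ n / (n)! * y ^ n‖ ∂μ := by
        calc ‖(∫ y, y ^ n ∂μ) / (n)!‖ * B ^ n = ‖∫ y, B ^ n / (n)! * y ^ n ∂μ‖ := by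
              rw [integral_const_mul, Real.norm_eq_abs, Real.norm_eq_abs, abs_mul, abs_div,
                abs_div, abs_pow, abs_of_pos hB0, Nat.abs_cast]
              ring
          _ ≤ ∫ y, ‖B ^ n / (n)! * y ^ n‖ ∂μ := norm_integral_le_integral_norm _
      refine h1.trans ?_
      apply integral_mono (hmono B (by rw [abs_of_pos hB0]) n).norm hDint
      intro y
      show ‖B ^ n / (n)! * y ^ n‖ ≤ D y
      rw [Real.norm_eq_abs, abs_mul, abs_div, abs_pow, abs_pow, abs_of_pos hB0, Nat.abs_cast]
      calc B ^ n / (n)! * |y| ^ n = |B * y| ^ n / (n)! := by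
            rw [abs_mul, abs_of_pos hB0, mul_pow]; ring
        _ ≤ D y := hdom B (by rw [abs_of_pos hB0]) n y
  · exact ENNReal.coe_pos.mpr (by simp [Real.toNNReal_pos]; positivity)
  · intro t htball
    have ht : |t| < B := by
      rw [EMetric.mem_ball, edist_zero_right] at htball
      have h2 : ‖t‖₊ < (A/2).toNNReal := by exact_mod_cast htball
      have h3 : ‖t‖ < ((A/2).toNNReal : ℝ) := h2
      rwa [Real.norm_eq_abs, Real.coe_toNNReal _ hB0.le] at h3
    have := hhassum t ht.le
    have heq : (fun n => (ofScalars ℝ (fun n => (∫ y, y ^ n ∂μ) / (n)!) n) fun _ => t)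
        = fun n => (∫ y, y ^ n ∂μ) / (n)! * t ^ n := by
      funext n
      rw [ofScalars_apply_eq]
      simp [smul_eq_mul]
    rw [heq]
    simpa using this

theorem mgf_iteratedDeriv (hA : 0 < A)
    (hfin : ∀ t : ℝ, |t| < A → Integrable (fun y => Real.exp (t * y)) μ) (n : ℕ) :
    iteratedDeriv n (fun t => ∫ y, Real.exp (t * y) ∂μ) 0 = ∫ y, y ^ n ∂μ := by
  have hball := mgf_hasFPowerSeriesOnBall μ A hA hfin
  have h := hball.factorial_smul (y := (1 : ℝ)) n
  rw [ofScalars_apply_eq] at h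
  rw [iteratedDeriv_eq_iteratedFDeriv, ← h]
  simp only [one_pow, smul_eq_mul, mul_one, nsmul_eq_mul]
  field_simp


theorem lambda_facts (hA : 0 < A)
    (hfin : ∀ t : ℝ, |t| < A → Integrable (fun y => Real.exp (t * y)) μ)
    (hmean : ∫ y, y ∂μ = 0) (σ : ℝ) (hvar : ∫ y, y ^ 2 ∂μ = σ ^ 2)
    (Λ : ℝ → ℝ) (hΛ : ∀ t : ℝ, Λ t = Real.log (∫ y, Real.exp (t * y) ∂μ)) :
    AnalyticAt ℝ Λ 0 ∧ deriv (deriv Λ) 0 = σ ^ 2 ∧ Λ 0 = 0 := by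
  set M : ℝ → ℝ := fun t => ∫ y, Real.exp (t * y) ∂μ with hM
  have hMan : AnalyticAt ℝ M 0 :=
    (mgf_hasFPowerSeriesOnBall μ A hA hfin).hasFPowerSeriesAt.analyticAt
  have hM0 : M 0 = 1 := by simp [hM]
  have hΛfun : Λ = fun t => Real.log (M t) := funext hΛ
  have hlogan : AnalyticAt ℝ Real.log (M 0) := hM0 ▸ analyticAt_rlog_one
  have hΛan : AnalyticAt ℝ Λ 0 := by
    rw [hΛfun]; exact hlogan.comp hMan
  have hM1 : deriv M 0 = 0 := by
    have h := mgf_iteratedDeriv μ A hA hfin 1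
    rw [iteratedDeriv_one, ← hM] at h
    simp only [pow_one] at h
    rw [h, hmean]
  have hM2 : deriv (deriv M) 0 = σ ^ 2 := by
    have h := mgf_iteratedDeriv μ A hA hfin 2
    rw [iteratedDeriv_succ, iteratedDeriv_one, ← hM] at h
    rw [h, hvar]
  have evM : ∀ᶠ t in nhds (0:ℝ), AnalyticAt ℝ M t := hMan.eventually_analyticAt
  have evMne : ∀ᶠ t in nhds (0:ℝ), M t ≠ 0 :=
    hMan.continuousAt.eventually_ne (hM0 ▸ one_ne_zero)
  have EΛ : deriv Λ =ᶠ[nhds (0:ℝ)] fun t => deriv M t / M t := by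
    filter_upwards [evM, evMne] with t h1 h2
    rw [hΛfun]
    exact (HasDerivAt.log h1.differentiableAt.hasDerivAt h2).deriv
  have hd2 : deriv (deriv Λ) 0 = σ ^ 2 := by
    rw [EΛ.deriv_eq]
    rw [deriv_fun_div (hMan.deriv'.differentiableAt) (hMan.differentiableAt) (hM0 ▸ one_ne_zero)]
    rw [hM0, hM1, hM2]
    ring
  exact ⟨hΛan, hd2, by rw [hΛfun]; simp [hM0]⟩

end MGF

section EvCalc
variable {H u f g : ℝ → ℝ}

lemma ev_deriv_comp (hu : ∀ᶠ z in 𝓝 (0:ℝ), AnalyticAt ℝ u (H z))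
    (hH : ∀ᶠ z in 𝓝 (0:ℝ), AnalyticAt ℝ H z) :
    deriv (fun z => u (H z)) =ᶠ[𝓝 (0:ℝ)] fun z => deriv u (H z) * deriv H z := by
  filter_upwards [hu, hH] with z h1 h2
  exact deriv_comp z h1.differentiableAt h2.differentiableAt

lemma ev_diff_comp (hu : ∀ᶠ z in 𝓝 (0:ℝ), AnalyticAt ℝ u (H z))
    (hH : ∀ᶠ z in 𝓝 (0:ℝ), AnalyticAt ℝ H z) :
    ∀ᶠ z in 𝓝 (0:ℝ), DifferentiableAt ℝ (fun z => u (H z)) z := by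
  filter_upwards [hu, hH] with z h1 h2
  exact h1.differentiableAt.comp z h2.differentiableAt

lemma ev_deriv_mul (hf : ∀ᶠ z in 𝓝 (0:ℝ), DifferentiableAt ℝ f z)
    (hg : ∀ᶠ z in 𝓝 (0:ℝ), DifferentiableAt ℝ g z) :
    deriv (fun z => f z * g z) =ᶠ[𝓝 (0:ℝ)] fun z => deriv f z * g z + f z * deriv g z := by
  filter_upwards [hf, hg] with z h1 h2
  exact deriv_mul h1 h2

lemma ev_deriv_add (hf : ∀ᶠ z in 𝓝 (0:ℝ), DifferentiableAt ℝ f z)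
    (hg : ∀ᶠ z in 𝓝 (0:ℝ), DifferentiableAt ℝ g z) :
    deriv (fun z => f z + g z) =ᶠ[𝓝 (0:ℝ)] fun z => deriv f z + deriv g z := by
  filter_upwards [hf, hg] with z h1 h2
  exact deriv_add h1 h2
end EvCalc


/-- Definition of the Cramér series: with `h = H(z)` the small solution of `m̄(h) = σz`
(where `m̄ = (log R)'`), the function `λ(z)` defined by
`m̄²/(2σ²) − h·m̄ + log R = z³·λ(z)` is analytic at `z = 0`, with
`λ(z) = c₀ + c₁ z + ⋯` where `c₀ = γ₃/(6σ³)` and `c₁ = (σ²γ₄ − 3γ₃²)/(24σ⁶)`. -/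
theorem cramer_series_exists
    (μ : Measure ℝ) [IsProbabilityMeasure μ]
    (hmean : ∫ y, y ∂μ = 0) (σ : ℝ) (hσ : 0 < σ) (hvar : ∫ y, y ^ 2 ∂μ = σ ^ 2)
    (A : ℝ) (hA : 0 < A)
    (hfin : ∀ t : ℝ, |t| < A → Integrable (fun y => Real.exp (t * y)) μ)
    (Λ : ℝ → ℝ) (hΛ : ∀ t : ℝ, Λ t = Real.log (∫ y, Real.exp (t * y) ∂μ))
    (γ : ℕ → ℝ) (hγ : ∀ ν, γ ν = iteratedDeriv ν Λ 0)
    (ε : ℝ) (hε : 0 < ε) (H : ℝ → ℝ) (hH0 : H 0 = 0) (hHan : AnalyticAt ℝ H 0)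
    (hHroot : ∀ z : ℝ, |z| < ε → deriv Λ (H z) = σ * z) :
    ∃ lam : ℝ → ℝ, AnalyticAt ℝ lam 0 ∧
      (∀ z : ℝ, |z| < ε →
        (σ * z) ^ 2 / (2 * σ ^ 2) - H z * (σ * z) + Λ (H z) = z ^ 3 * lam z) ∧
      lam 0 = γ 3 / (6 * σ ^ 3) ∧
      deriv lam 0 = (σ ^ 2 * γ 4 - 3 * γ 3 ^ 2) / (24 * σ ^ 6) := by
  obtain ⟨hΛan, hΛ2, hΛ0⟩ := lambda_facts μ A hA hfin hmean σ hvar Λ hΛ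
  have hσ0 : σ ≠ 0 := ne_of_gt hσ
  set Λ1 : ℝ → ℝ := deriv Λ with hΛ1def
  set Λ2 : ℝ → ℝ := deriv Λ1 with hΛ2def
  set Λ3 : ℝ → ℝ := deriv Λ2 with hΛ3def
  set Λ4 : ℝ → ℝ := deriv Λ3 with hΛ4def
  have hΛ1an : AnalyticAt ℝ Λ1 0 := hΛan.deriv'
  have hΛ2an : AnalyticAt ℝ Λ2 0 := hΛ1an.deriv'
  have hΛ3an : AnalyticAt ℝ Λ3 0 := hΛ2an.deriv'
  -- γ values
  have hγ3 : γ 3 = Λ3 0 := by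
    rw [hγ 3, iteratedDeriv_succ, iteratedDeriv_succ, iteratedDeriv_one]
  have hγ4 : γ 4 = Λ4 0 := by
    rw [hγ 4, iteratedDeriv_succ, iteratedDeriv_succ, iteratedDeriv_succ, iteratedDeriv_one]
  have hL2 : Λ2 0 = σ ^ 2 := hΛ2
  -- eventualities
  have hHc : Tendsto H (𝓝 0) (𝓝 (0:ℝ)) := by
    have := hHan.continuousAt; rwa [ContinuousAt, hH0] at this
  have evH : ∀ᶠ z in 𝓝 (0:ℝ), AnalyticAt ℝ H z := hHan.eventually_analyticAt
  have evH1 : ∀ᶠ z in 𝓝 (0:ℝ), AnalyticAt ℝ (deriv H) z := evH.mono fun _ h => h.deriv'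
  have evH2 : ∀ᶠ z in 𝓝 (0:ℝ), AnalyticAt ℝ (deriv (deriv H)) z := evH1.mono fun _ h => h.deriv'
  have pull : ∀ {u : ℝ → ℝ}, AnalyticAt ℝ u 0 → ∀ᶠ z in 𝓝 (0:ℝ), AnalyticAt ℝ u (H z) :=
    fun hu => hHc.eventually hu.eventually_analyticAt
  have evball : ∀ᶠ z in 𝓝 (0:ℝ), |z| < ε := by
    have h1 : Set.Ioo (-ε) ε ∈ 𝓝 (0:ℝ) := Ioo_mem_nhds (by linarith) hε
    filter_upwards [h1] with z hz
    exact abs_lt.mpr ⟨hz.1, hz.2⟩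
  -- the chain of derivative identities for H
  have E1 : (fun z => Λ1 (H z)) =ᶠ[𝓝 (0:ℝ)] fun z => σ * z := by
    filter_upwards [evball] with z hz; exact hHroot z hz
  have E2 : (fun z => Λ2 (H z) * deriv H z) =ᶠ[𝓝 (0:ℝ)] fun _ => σ := by
    refine ((ev_deriv_comp (pull hΛ1an) evH).symm.trans E1.deriv).trans ?_
    refine Eventually.of_forall fun z => ?_
    exact ((hasDerivAt_id z).const_mul σ).deriv.trans (mul_one σ)
  have E3 : (fun z => Λ3 (H z) * deriv H z * deriv H z + Λ2 (H z) * deriv (deriv H) z)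
      =ᶠ[𝓝 (0:ℝ)] fun _ => 0 := by
    have h1 := ev_deriv_mul (ev_diff_comp (pull hΛ2an) evH)
      (evH1.mono fun _ h => h.differentiableAt)
    have h2 := ev_deriv_comp (pull hΛ2an) evH
    have step1 : (fun z => Λ3 (H z) * deriv H z * deriv H z + Λ2 (H z) * deriv (deriv H) z)
        =ᶠ[𝓝 (0:ℝ)] deriv (fun z => Λ2 (H z) * deriv H z) := by
      filter_upwards [h1, h2] with z hz1 hz2
      rw [hz1, hz2]
    refine step1.trans (E2.deriv.trans ?_)
    refine Eventually.of_forall fun z => ?_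
    simp
  have E4 : (fun z =>
        ((Λ4 (H z) * deriv H z * deriv H z + Λ3 (H z) * deriv (deriv H) z) * deriv H z
          + (Λ3 (H z) * deriv H z) * deriv (deriv H) z)
        + (Λ3 (H z) * deriv H z * deriv (deriv H) z + Λ2 (H z) * deriv (deriv (deriv H)) z))
      =ᶠ[𝓝 (0:ℝ)] fun _ => 0 := by
    have dA : ∀ᶠ z in 𝓝 (0:ℝ), DifferentiableAt ℝ (fun z => Λ3 (H z) * deriv H z) z := by
      filter_upwards [ev_diff_comp (pull hΛ3an) evH, evH1.mono fun _ h => h.differentiableAt]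
        with z h1 h2
      exact h1.mul h2
    have dAB : ∀ᶠ z in 𝓝 (0:ℝ),
        DifferentiableAt ℝ (fun z => Λ3 (H z) * deriv H z * deriv H z) z := by
      filter_upwards [dA, evH1.mono fun _ h => h.differentiableAt] with z h1 h2
      exact h1.mul h2
    have dC : ∀ᶠ z in 𝓝 (0:ℝ), DifferentiableAt ℝ (fun z => Λ2 (H z) * deriv (deriv H) z) z := by
      filter_upwards [ev_diff_comp (pull hΛ2an) evH, evH2.mono fun _ h => h.differentiableAt]
        with z h1 h2
      exact h1.mul h2
    have hsum := ev_deriv_add dAB dC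
    -- deriv of first summand
    have h1 := ev_deriv_mul dA (evH1.mono fun _ h => h.differentiableAt)
    have h2 := ev_deriv_mul (ev_diff_comp (pull hΛ3an) evH) (evH1.mono fun _ h => h.differentiableAt)
    have h3 := ev_deriv_comp (pull hΛ3an) evH
    -- deriv of second summand
    have h4 := ev_deriv_mul (ev_diff_comp (pull hΛ2an) evH) (evH2.mono fun _ h => h.differentiableAt)
    have h5 := ev_deriv_comp (pull hΛ2an) evH
    have step1 : (fun z =>
        ((Λ4 (H z) * deriv H z * deriv H z + Λ3 (H z) * deriv (deriv H) z) * deriv H z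
          + (Λ3 (H z) * deriv H z) * deriv (deriv H) z)
        + (Λ3 (H z) * deriv H z * deriv (deriv H) z + Λ2 (H z) * deriv (deriv (deriv H)) z))
        =ᶠ[𝓝 (0:ℝ)] deriv (fun z => Λ3 (H z) * deriv H z * deriv H z + Λ2 (H z) * deriv (deriv H) z) := by
      filter_upwards [hsum, h1, h2, h3, h4, h5] with z z1 z2 z3 z4 z5 z6
      rw [z1, z2, z3, z4, z5, z6]
    refine step1.trans (E3.deriv.trans ?_)
    refine Eventually.of_forall fun z => ?_
    simp
  -- values at 0
  have e2 : Λ2 0 * deriv H 0 = σ := by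
    have := E2.eq_of_nhds; simpa [hH0] using this
  have e3 : Λ3 0 * deriv H 0 * deriv H 0 + Λ2 0 * deriv (deriv H) 0 = 0 := by
    have := E3.eq_of_nhds; simpa [hH0] using this
  have e4 : ((Λ4 0 * deriv H 0 * deriv H 0 + Λ3 0 * deriv (deriv H) 0) * deriv H 0
          + (Λ3 0 * deriv H 0) * deriv (deriv H) 0)
        + (Λ3 0 * deriv H 0 * deriv (deriv H) 0 + Λ2 0 * deriv (deriv (deriv H)) 0) = 0 := by
    have := E4.eq_of_nhds; simpa [hH0] using this
  -- the function G
  set G : ℝ → ℝ := fun z => (σ * z) ^ 2 / (2 * σ ^ 2) - H z * (σ * z) + Λ (H z) with hGdef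
  have hGan : AnalyticAt ℝ G 0 := by
    have h1 : AnalyticAt ℝ (fun z : ℝ => (σ * z) ^ 2 / (2 * σ ^ 2)) 0 := by
      apply AnalyticAt.div
      · exact (analyticAt_const.mul analyticAt_id).pow 2
      · exact analyticAt_const
      · positivity
    have h2 : AnalyticAt ℝ (fun z : ℝ => H z * (σ * z)) 0 :=
      hHan.mul (analyticAt_const.mul analyticAt_id)
    have h3 : AnalyticAt ℝ (fun z : ℝ => Λ (H z)) 0 := by
      have : AnalyticAt ℝ Λ (H 0) := hH0.symm ▸ hΛan
      exact this.comp hHan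
    exact (h1.sub h2).add h3
  have hG0 : G 0 = 0 := by simp [hGdef, hH0, hΛ0]
  -- first derivative of G
  have EG : deriv G =ᶠ[𝓝 (0:ℝ)] fun z => z - σ * H z := by
    filter_upwards [evball, evH, pull hΛan] with z hz hHz hΛz
    have hH' : HasDerivAt H (deriv H z) z := hHz.differentiableAt.hasDerivAt
    have hΛ' : HasDerivAt Λ (Λ1 (H z)) (H z) := hΛz.differentiableAt.hasDerivAt
    have hc : HasDerivAt (fun z => Λ (H z)) (Λ1 (H z) * deriv H z) z := hΛ'.comp z hH'
    have hp1 : HasDerivAt (fun z : ℝ => (σ * z) ^ 2 / (2 * σ ^ 2))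
        ((2 : ℕ) * (σ * z) ^ 1 * (σ * 1) / (2 * σ ^ 2)) z :=
      (((hasDerivAt_id z).const_mul σ).pow 2).div_const _
    have hp2 : HasDerivAt (fun z : ℝ => H z * (σ * z))
        (deriv H z * (σ * z) + H z * (σ * 1)) z := hH'.mul ((hasDerivAt_id z).const_mul σ)
    have hG' : HasDerivAt G
        ((2 : ℕ) * (σ * z) ^ 1 * (σ * 1) / (2 * σ ^ 2) - (deriv H z * (σ * z) + H z * (σ * 1))
          + Λ1 (H z) * deriv H z) z := (hp1.sub hp2).add hc
    rw [hG'.deriv, hHroot z hz]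
    field_simp
    ring
  have EG2 : deriv (deriv G) =ᶠ[𝓝 (0:ℝ)] fun z => 1 - σ * deriv H z := by
    refine EG.deriv.trans ?_
    filter_upwards [evH] with z hz
    exact ((hasDerivAt_id z).sub ((hz.differentiableAt.hasDerivAt).const_mul σ)).deriv
  have EG3 : deriv (deriv (deriv G)) =ᶠ[𝓝 (0:ℝ)] fun z => 0 - σ * deriv (deriv H) z := by
    refine EG2.deriv.trans ?_
    filter_upwards [evH1] with z hz
    exact ((hasDerivAt_const z (1:ℝ)).sub ((hz.differentiableAt.hasDerivAt).const_mul σ)).deriv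
  have EG4 : deriv (deriv (deriv (deriv G))) =ᶠ[𝓝 (0:ℝ)]
      fun z => 0 - σ * deriv (deriv (deriv H)) z := by
    refine EG3.deriv.trans ?_
    filter_upwards [evH2] with z hz
    exact ((hasDerivAt_const z (0:ℝ)).sub ((hz.differentiableAt.hasDerivAt).const_mul σ)).deriv
  have vG1 : deriv G 0 = 0 := by
    have := EG.eq_of_nhds; simpa [hH0] using this
  have vG2 : deriv (deriv G) 0 = 1 - σ * deriv H 0 := EG2.eq_of_nhds
  have vG3 : deriv (deriv (deriv G)) 0 = 0 - σ * deriv (deriv H) 0 := EG3.eq_of_nhds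
  have vG4 : deriv (deriv (deriv (deriv G))) 0 = 0 - σ * deriv (deriv (deriv H)) 0 :=
    EG4.eq_of_nhds
  -- power series of G
  obtain ⟨p, hp⟩ := hGan
  have hcoeff : ∀ n : ℕ, ((n.factorial : ℝ)) * p.coeff n = iteratedDeriv n G 0 := by
    intro n
    obtain ⟨r, hball⟩ := hp
    have h := hball.factorial_smul (y := (1:ℝ)) n
    rw [FormalMultilinearSeries.apply_eq_pow_smul_coeff] at h
    rw [iteratedDeriv_eq_iteratedFDeriv, ← h]
    simp [nsmul_eq_mul]
  have hi1 : iteratedDeriv 1 G 0 = deriv G 0 := by rw [iteratedDeriv_one]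
  have hi2 : iteratedDeriv 2 G 0 = deriv (deriv G) 0 := by
    rw [iteratedDeriv_succ, iteratedDeriv_one]
  have hi3 : iteratedDeriv 3 G 0 = deriv (deriv (deriv G)) 0 := by
    rw [iteratedDeriv_succ, iteratedDeriv_succ, iteratedDeriv_one]
  have hi4 : iteratedDeriv 4 G 0 = deriv (deriv (deriv (deriv G))) 0 := by
    rw [iteratedDeriv_succ, iteratedDeriv_succ, iteratedDeriv_succ, iteratedDeriv_one]
  -- solve for the derivatives of H at 0
  set a1 := deriv H 0 with ha1def
  set a2 := deriv (deriv H) 0 with ha2def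
  set a3 := deriv (deriv (deriv H)) 0 with ha3def
  rw [hL2] at e2 e3 e4
  have ha1 : σ * a1 = 1 := mul_left_cancel₀ hσ0 (by linear_combination e2)
  have ha2 : σ^4 * a2 = -(Λ3 0) := by
    linear_combination σ^2 * e3 - Λ3 0 * (σ*a1+1) * ha1
  have ha3 : σ^7 * a3 = -(σ^2 * Λ4 0 - 3 * (Λ3 0)^2) := by
    linear_combination σ^5 * e4 - 3*σ^3*(Λ3 0)*a1 * e3 +
      (-σ^2*(Λ4 0)*(1+σ*a1+σ^2*a1^2) + 3*(Λ3 0)^2*(1+σ*a1+σ^2*a1^2)) * ha1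
  -- coefficient values
  have hc0 : p.coeff 0 = 0 := by
    have := hcoeff 0
    rw [iteratedDeriv_zero, hG0] at this
    simpa using this
  have hc1 : p.coeff 1 = 0 := by
    have := hcoeff 1
    rw [hi1, vG1] at this
    simpa using this
  have hfc2 : (2:ℝ) * p.coeff 2 = 1 - σ * a1 := by
    have := hcoeff 2
    rw [hi2, vG2] at this
    norm_num at this ⊢
    exact this
  have hfc3 : (6:ℝ) * p.coeff 3 = 0 - σ * a2 := by
    have := hcoeff 3
    rw [hi3, vG3] at this
    norm_num at this ⊢
    rw [← this]
  have hfc4 : (24:ℝ) * p.coeff 4 = 0 - σ * a3 := by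
    have := hcoeff 4
    rw [hi4, vG4] at this
    norm_num at this ⊢
    rw [← this]
  have hc2 : p.coeff 2 = 0 := by linear_combination hfc2/2 - ha1/2
  have hc3 : p.coeff 3 = γ 3 / (6 * σ^3) := by
    rw [hγ3, eq_div_iff (by positivity)]
    linear_combination σ^3 * hfc3 - ha2
  have hc4 : p.coeff 4 = (σ^2 * γ 4 - 3 * (γ 3)^2) / (24 * σ^6) := by
    rw [hγ3, hγ4, eq_div_iff (by positivity)]
    linear_combination σ^6 * hfc4 - ha3
  -- construct lam via iterated dslope
  set F1 : ℝ → ℝ := dslope G 0 with hF1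
  set F2 : ℝ → ℝ := dslope F1 0 with hF2
  set lam : ℝ → ℝ := dslope F2 0 with hlamdef
  have hiter : (Function.swap dslope (0:ℝ))^[3] G = lam := rfl
  have hps : HasFPowerSeriesAt lam (FormalMultilinearSeries.fslope^[3] p) 0 :=
    hiter ▸ hp.has_fpower_series_iterate_dslope_fslope 3
  have hlam0 : lam 0 = p.coeff 3 := by
    have h2 : (FormalMultilinearSeries.fslope^[3] p).coeff 0 = lam 0 := hps.coeff_zero 1
    rw [FormalMultilinearSeries.coeff_iterate_fslope] at h2
    exact h2.symm
  have hlamd : deriv lam 0 = p.coeff 4 := by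
    have h := hps.deriv
    rw [FormalMultilinearSeries.apply_eq_pow_smul_coeff] at h
    rw [h]
    have : (FormalMultilinearSeries.fslope^[3] p).coeff 1 = p.coeff 4 :=
      FormalMultilinearSeries.coeff_iterate_fslope 3 1
    rw [this]
    simp
  -- intermediate values vanish
  have hF10 : F1 0 = 0 := by rw [hF1, dslope_same]; exact vG1
  have hF20 : F2 0 = 0 := by
    rw [hF2, dslope_same]
    have hpsF1 : HasFPowerSeriesAt F1 p.fslope 0 := hp.has_fpower_series_dslope_fslope
    have h := hpsF1.deriv
    rw [FormalMultilinearSeries.apply_eq_pow_smul_coeff] at h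
    rw [h, FormalMultilinearSeries.coeff_fslope]
    simpa using hc2
  refine ⟨lam, hps.analyticAt, ?_, ?_, ?_⟩
  · intro z hz
    show G z = z ^ 3 * lam z
    rcases eq_or_ne z 0 with rfl | hz0
    · rw [hG0]; ring
    · have l1 : F1 z = G z / z := by
        rw [hF1, dslope_of_ne _ hz0, slope_def_field, hG0]
        simp
      have l2 : F2 z = G z / z ^ 2 := by
        rw [hF2, dslope_of_ne _ hz0, slope_def_field, hF10, l1, sub_zero, sub_zero,
          div_div, ← pow_two]
      have l3 : lam z = G z / z ^ 3 := by
        rw [hlamdef, dslope_of_ne _ hz0, slope_def_field, hF20, l2, sub_zero, sub_zero,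
          div_div, ← pow_succ]
      rw [l3, mul_div_assoc']
      rw [mul_comm, mul_div_assoc, div_self (pow_ne_zero 3 hz0), mul_one]
  · rw [hlam0, hc3]
  · rw [hlamd, hc4]
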